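/- Let L be an integral lattice with an involutive isometry c, and suppose there is a class w ∈ L with x·x ≡ x·w (mod 2) for all x ∈ L (a characteristic element) such that c(w) = -w. Then the invariant sublattice L_+ = Ker(1 - c) is an even lattice. -/
import Mathlib


/-- If a lattice `L` with involutive isometry `c` has a characteristic
element `w` (i.e. `x·x ≡ x·w (mod 2)` for all `x`) with `c(w) = -w`, then the invariant
sublattice `L₊ = Ker(1 - c)` is even. -/
theorem stmt_8 (L : Type*) [AddCommGroup L] [Module ℤ L]
    (B : L → L → ℤ)
    (hadd₁ : ∀ x y z : L, B (x + y) z = B x z + B y z)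
    (hadd₂ : ∀ x y z : L, B x (y + z) = B x y + B x z)
    (hsymm : ∀ x y, B x y = B y x)
    (c : L →ₗ[ℤ] L) (hc2 : ∀ x, c (c x) = x) (hciso : ∀ x y, B (c x) (c y) = B x y)
    (w : L) (hw : ∀ x : L, B x x ≡ B x w [ZMOD 2]) (hcw : c w = -w) :
    ∀ x : L, c x = x → 2 ∣ B x x := by
  intro x hx
  have hzero : B x 0 = 0 := by
    have := hadd₂ x 0 0
    simpa using this
  have hneg : B x (-w) = -(B x w) := by
    have h := hadd₂ x w (-w)
    simp [hzero] at h
    linarith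
  have hwx : B x w = 0 := by
    have h := hciso x w
    rw [hx, hcw, hneg] at h
    linarith
  have := hw x
  rw [hwx] at this
  have h2 : (2 : ℤ) ∣ B x x - 0 := (Int.ModEq.dvd this.symm)
  simpa using h2
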